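/- arXiv:2308.13214 — 2 statements merged into one kernel-verified Lean document; each statement's English description precedes it below -/
import Mathlib

section
/- Let A ∈ ℍ^{n×n}, let V₁ ∈ ℍ^{n×m} with ‖V₁‖ = 1, and assume the Arnoldi hypotheses through step k−1 (so V₁, …, V_k and the quaternions h_{i,j} for j ≤ k−1 are defined and h_{j+1,j} ≠ 0 for j = 1, …, k−1). Define h_{i,k} = tr(V_i^*(A V_k)) for i = 1, …, k and W_k := A V_k − Σ_{i=1}^k V_i h_{i,k}. Then W_k = 0 (i.e. the global quaternion Arnoldi process breaks down at step k) if and only if the grade of V₁ with respect to A is k, i.e. V₁, A V₁, …, A^{k−1} V₁ are right linearly independent over ℍ while V₁, A V₁, …, A^{k} V₁ are right linearly dependent over ℍ. Moreover, if W_k = 0 then the subspace 𝒦_k(A, V₁) (the right span of V₁, A V₁, …, A^{k−1} V₁ over ℍ) is invariant under left multiplication by A. -/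
/-!
Gram–Schmidt makes the Arnoldi matrices `V₁, …, V_k` orthonormal for the quaternion-valued
inner product `tr(Y^* X)`, and the recursion puts each `V_j` in the Krylov space `𝒦_j(A, V₁)`.
Orthonormal matrices are right linearly independent, so a dimension count gives
`span{V₁, …, V_k} = 𝒦_k` and the right independence of `V₁, …, A^{k-1} V₁`. As `W_k` is the
residual of projecting `A V_k` orthogonally onto this span, `W_k = 0` iff `A V_k ∈ 𝒦_k`, iff
`𝒦_k` is `A`-invariant, iff `A^k V₁ ∈ 𝒦_k`, iff `V₁, …, A^k V₁` are right dependent.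
-/

open Matrix Quaternion

noncomputable section

/-- Entrywise right scalar multiple of a quaternion matrix. -/
def qsmul {n m : ℕ} (X : Matrix (Fin n) (Fin m) ℍ[ℝ]) (a : ℍ[ℝ]) :
    Matrix (Fin n) (Fin m) ℍ[ℝ] := fun i j => X i j * a

/-- Frobenius norm of a quaternion matrix: `‖X‖ = (Re tr(X^* X))^{1/2}`. -/
def qnorm {n m : ℕ} (X : Matrix (Fin n) (Fin m) ℍ[ℝ]) : ℝ :=
  Real.sqrt (Matrix.trace (Xᴴ * X)).re

/-- The Arnoldi hypotheses through step `k`. -/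
structure ArnoldiData (n m k : ℕ) (A : Matrix (Fin n) (Fin n) ℍ[ℝ])
    (V : ℕ → Matrix (Fin n) (Fin m) ℍ[ℝ]) (h : ℕ → ℕ → ℍ[ℝ]) : Prop where
  normV1 : qnorm (V 1) = 1
  hdef : ∀ j ∈ Finset.Icc 1 k, ∀ i ∈ Finset.Icc 1 j,
      h i j = Matrix.trace ((V i)ᴴ * (A * V j))
  hsub : ∀ j ∈ Finset.Icc 1 k,
      h (j+1) j = (qnorm (A * V j - ∑ i ∈ Finset.Icc 1 j, qsmul (V i) (h i j)) : ℍ[ℝ])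
  hsub_ne : ∀ j ∈ Finset.Icc 1 k, h (j+1) j ≠ 0
  vdef : ∀ j ∈ Finset.Icc 1 k,
      V (j+1) = qsmul (A * V j - ∑ i ∈ Finset.Icc 1 j, qsmul (V i) (h i j)) (h (j+1) j)⁻¹

open MulOpposite Module Submodule

theorem trace_conjTranspose_mul_comm {p q R : Type*} [Fintype p] [Fintype q]
    [NonUnitalNonAssocSemiring R] [StarRing R] (X Y : Matrix p q R) : trace (Yᴴ * X) = star (trace (Xᴴ * Y)) := by
  rw [← trace_conjTranspose, conjTranspose_mul, conjTranspose_conjTranspose]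

theorem mul_mem_of_mem_span {p q r : Type*} [Fintype q] {A : Matrix p q ℍ[ℝ]}
    {S : Set (Matrix q r ℍ[ℝ])} {P : Submodule ℍ[ℝ]ᵐᵒᵖ (Matrix p r ℍ[ℝ])}
    (hS : ∀ Y ∈ S, A * Y ∈ P) {Y : Matrix q r ℍ[ℝ]} (hY : Y ∈ span ℍ[ℝ]ᵐᵒᵖ S) : A * Y ∈ P := by
  induction hY using span_induction with
  | mem Y hY => exact hS Y hY
  | zero => simp
  | add Y Z _ _ hY hZ => rw [Matrix.mul_add]; exact add_mem hY hZ
  | smul a Y _ hY => rw [Matrix.mul_smul]; exact P.smul_mem a hY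

variable {n m : ℕ}

-- Right multiplication by quaternions is the `ℍ[ℝ]ᵐᵒᵖ`-module structure of Mathlib, in which
-- right spans and right linear (in)dependence are ordinary spans and linear (in)dependence.
theorem qsmul_eq_op_smul (X : Matrix (Fin n) (Fin m) ℍ[ℝ]) (a : ℍ[ℝ]) :
    qsmul X a = op a • X :=
  rfl

theorem trace_conjTranspose_mul_qsmul (X Y : Matrix (Fin n) (Fin m) ℍ[ℝ]) (a : ℍ[ℝ]) :
    trace (Xᴴ * qsmul Y a) = trace (Xᴴ * Y) * a := by
  rw [qsmul_eq_op_smul, Matrix.mul_smul, trace_smul, op_smul_eq_mul]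

theorem trace_conjTranspose_mul_self (X : Matrix (Fin n) (Fin m) ℍ[ℝ]) :
    trace (Xᴴ * X) = ((qnorm X ^ 2 : ℝ) : ℍ[ℝ]) := by
  have hsum : trace (Xᴴ * X) = ((∑ j, ∑ i, normSq (X i j) : ℝ) : ℍ[ℝ]) := by
    simp only [trace, diag, mul_apply, conjTranspose_apply, star_mul_self, ← algebraMap_def,
      map_sum]
  have hre : (trace (Xᴴ * X)).re = (∑ j, ∑ i, normSq (X i j) : ℝ) := by rw [hsum]; rfl
  have hnonneg : 0 ≤ (∑ j, ∑ i, normSq (X i j) : ℝ) :=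
    Finset.sum_nonneg fun j _ => Finset.sum_nonneg fun i _ => normSq_nonneg
  rw [qnorm, hre, Real.sq_sqrt hnonneg, hsum]

theorem trace_conjTranspose_mul_self_qsmul_inv_qnorm {W : Matrix (Fin n) (Fin m) ℍ[ℝ]}
    (hW : qnorm W ≠ 0) :
    trace ((qsmul W (qnorm W : ℍ[ℝ])⁻¹)ᴴ * qsmul W (qnorm W : ℍ[ℝ])⁻¹) = 1 := by
  set U := qsmul W (qnorm W : ℍ[ℝ])⁻¹
  calc trace (Uᴴ * U) = star (trace (Wᴴ * W) * (qnorm W : ℍ[ℝ])⁻¹) * (qnorm W : ℍ[ℝ])⁻¹ := by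
        rw [trace_conjTranspose_mul_qsmul, trace_conjTranspose_mul_comm,
          trace_conjTranspose_mul_qsmul]
    _ = ((qnorm W ^ 2 * (qnorm W)⁻¹ * (qnorm W)⁻¹ : ℝ) : ℍ[ℝ]) := by
        rw [trace_conjTranspose_mul_self, ← coe_inv, ← coe_mul, star_coe, ← coe_mul]
    _ = 1 := by rw [show qnorm W ^ 2 * (qnorm W)⁻¹ * (qnorm W)⁻¹ = 1 by field_simp, coe_one]

def TraceOrthonormalOn {ι : Type*} [DecidableEq ι] (v : ι → Matrix (Fin n) (Fin m) ℍ[ℝ])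
    (s : Finset ι) : Prop :=
  ∀ i ∈ s, ∀ j ∈ s, trace ((v i)ᴴ * v j) = if i = j then 1 else 0

namespace TraceOrthonormalOn

variable {ι : Type*} [DecidableEq ι] {v : ι → Matrix (Fin n) (Fin m) ℍ[ℝ]} {s : Finset ι}

theorem trace_mul_sum_qsmul (hv : TraceOrthonormalOn v s) {i : ι} (hi : i ∈ s) (c : ι → ℍ[ℝ]) :
    trace ((v i)ᴴ * ∑ l ∈ s, qsmul (v l) (c l)) = c i := by
  rw [Matrix.mul_sum, trace_sum, Finset.sum_eq_single_of_mem i hi]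
  · rw [trace_conjTranspose_mul_qsmul, hv i hi i hi, if_pos rfl, one_mul]
  · intro l hl hli
    rw [trace_conjTranspose_mul_qsmul, hv i hi l hl, if_neg (Ne.symm hli), zero_mul]

theorem trace_mul_sub_sum_eq_zero (hv : TraceOrthonormalOn v s) {i : ι} (hi : i ∈ s)
    (X : Matrix (Fin n) (Fin m) ℍ[ℝ]) :
    trace ((v i)ᴴ * (X - ∑ l ∈ s, qsmul (v l) (trace ((v l)ᴴ * X)))) = 0 := by
  rw [Matrix.mul_sub, trace_sub, hv.trace_mul_sum_qsmul hi, sub_self]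

theorem linearIndepOn (hv : TraceOrthonormalOn v s) : LinearIndepOn ℍ[ℝ]ᵐᵒᵖ v s := by
  refine linearIndepOn_finset_iff.2 fun c hc i hi => unop_injective ?_
  have := hv.trace_mul_sum_qsmul hi fun l => (c l).unop
  simpa only [qsmul_eq_op_smul, op_unop, hc, Matrix.mul_zero, trace_zero, unop_zero] using this.symm

theorem finrank_span (hv : TraceOrthonormalOn v s) :
    finrank ℍ[ℝ]ᵐᵒᵖ (span ℍ[ℝ]ᵐᵒᵖ (v '' s)) = s.card := by
  rw [Set.image_eq_range, finrank_span_eq_card hv.linearIndepOn]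
  simp

theorem sub_sum_eq_zero_iff (hv : TraceOrthonormalOn v s) (X : Matrix (Fin n) (Fin m) ℍ[ℝ]) :
    X - ∑ l ∈ s, qsmul (v l) (trace ((v l)ᴴ * X)) = 0 ↔ X ∈ span ℍ[ℝ]ᵐᵒᵖ (v '' s) := by
  rw [sub_eq_zero, mem_span_image_finset_iff_exists_fun']
  constructor
  · intro hX
    exact ⟨fun l => op (trace ((v l)ᴴ * X)), hX.symm⟩
  · rintro ⟨c, rfl⟩
    have hsum : ∑ l ∈ s, c l • v l = ∑ l ∈ s, qsmul (v l) (c l).unop := by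
      simp only [qsmul_eq_op_smul, op_unop]
    rw [hsum]
    exact Finset.sum_congr rfl fun l hl => by rw [hv.trace_mul_sum_qsmul hl]

theorem insert (hv : TraceOrthonormalOn v s) {a : ι}
    (hs : ∀ i ∈ s, trace ((v i)ᴴ * v a) = 0) (ha : trace ((v a)ᴴ * v a) = 1) :
    TraceOrthonormalOn v (insert a s) := by
  intro i hi j hj
  rw [Finset.mem_insert] at hi hj
  by_cases hia : i = a <;> by_cases hja : j = a
  · subst hia hja
    rw [ha, if_pos rfl]
  · subst hia
    rw [trace_conjTranspose_mul_comm, hs j (hj.resolve_left hja), star_zero,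
      if_neg (Ne.symm hja)]
  · subst hja
    rw [hs i (hi.resolve_left hia), if_neg hia]
  · exact hv i (hi.resolve_left hia) j (hj.resolve_left hja)

end TraceOrthonormalOn

def krylov (A : Matrix (Fin n) (Fin n) ℍ[ℝ]) (X : Matrix (Fin n) (Fin m) ℍ[ℝ]) (t : ℕ) :
    Submodule ℍ[ℝ]ᵐᵒᵖ (Matrix (Fin n) (Fin m) ℍ[ℝ]) :=
  span ℍ[ℝ]ᵐᵒᵖ (Set.range fun i : Fin t => A ^ (i : ℕ) * X)

section Krylov

variable {A : Matrix (Fin n) (Fin n) ℍ[ℝ]} {X : Matrix (Fin n) (Fin m) ℍ[ℝ]} {t : ℕ}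

theorem mem_krylov_iff {Y : Matrix (Fin n) (Fin m) ℍ[ℝ]} :
    Y ∈ krylov A X t ↔ ∃ α : Fin t → ℍ[ℝ], Y = ∑ i : Fin t, qsmul (A ^ (i : ℕ) * X) (α i) := by
  rw [krylov, mem_span_range_iff_exists_fun]
  constructor
  · rintro ⟨c, rfl⟩
    exact ⟨fun i => (c i).unop, by simp only [qsmul_eq_op_smul, op_unop]⟩
  · rintro ⟨α, rfl⟩
    exact ⟨fun i => op (α i), rfl⟩

theorem pow_mul_mem_krylov {i : ℕ} (hi : i < t) : A ^ i * X ∈ krylov A X t :=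
  subset_span ⟨⟨i, hi⟩, rfl⟩

theorem krylov_mono : Monotone (krylov A X) := fun _ _ hts =>
  span_le.2 <| Set.range_subset_iff.2 fun i => pow_mul_mem_krylov (i.2.trans_le hts)

theorem finrank_krylov_le : finrank ℍ[ℝ]ᵐᵒᵖ (krylov A X t) ≤ t :=
  (finrank_range_le_card _).trans_eq (Fintype.card_fin t)

instance : FiniteDimensional ℍ[ℝ]ᵐᵒᵖ (krylov A X t) :=
  FiniteDimensional.span_of_finite _ (Set.finite_range _)

theorem mul_mem_krylov_succ {Y : Matrix (Fin n) (Fin m) ℍ[ℝ]} (hY : Y ∈ krylov A X t) :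
    A * Y ∈ krylov A X (t + 1) := by
  refine mul_mem_of_mem_span (Set.forall_mem_range.2 fun i => ?_) hY
  rw [← Matrix.mul_assoc, ← pow_succ']
  exact pow_mul_mem_krylov (Nat.succ_lt_succ i.2)

theorem forall_mul_mem_krylov_iff :
    (∀ Y ∈ krylov A X (t + 1), A * Y ∈ krylov A X (t + 1)) ↔
      A ^ (t + 1) * X ∈ krylov A X (t + 1) := by
  refine ⟨fun h => ?_, fun h Y hY => mul_mem_of_mem_span (Set.forall_mem_range.2 fun i => ?_) hY⟩
  · rw [pow_succ', Matrix.mul_assoc]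
    exact h _ (pow_mul_mem_krylov t.lt_succ_self)
  · rw [← Matrix.mul_assoc, ← pow_succ']
    rcases (Nat.add_one_le_of_lt i.2).lt_or_eq with hlt | heq
    · exact pow_mul_mem_krylov hlt
    · rwa [heq]

theorem pow_mul_mem_krylov_iff_not_linearIndependent
    (h : LinearIndependent ℍ[ℝ]ᵐᵒᵖ fun i : Fin t => A ^ (i : ℕ) * X) :
    A ^ t * X ∈ krylov A X t ↔
      ¬LinearIndependent ℍ[ℝ]ᵐᵒᵖ fun i : Fin (t + 1) => A ^ (i : ℕ) * X := by
  rw [linearIndependent_finSucc', not_and, not_not]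
  exact ⟨fun hmem _ => hmem, fun himp => himp h⟩

end Krylov

section RightLinearIndependence

variable {ι : Type*} [Fintype ι] {u : ι → Matrix (Fin n) (Fin m) ℍ[ℝ]}

theorem linearIndependent_iff_qsmul :
    LinearIndependent ℍ[ℝ]ᵐᵒᵖ u ↔ ∀ α : ι → ℍ[ℝ], ∑ i, qsmul (u i) (α i) = 0 → α = 0 := by
  rw [Fintype.linearIndependent_iff]
  constructor
  · intro h α hα
    exact funext fun i => op_injective (h (fun i => op (α i)) hα i)
  · intro h c hc i
    have := congrFun (h (fun i => (c i).unop) (by simpa only [qsmul_eq_op_smul, op_unop])) i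
    exact unop_injective this

theorem not_linearIndependent_iff_qsmul :
    ¬LinearIndependent ℍ[ℝ]ᵐᵒᵖ u ↔ ∃ α : ι → ℍ[ℝ], α ≠ 0 ∧ ∑ i, qsmul (u i) (α i) = 0 := by
  rw [linearIndependent_iff_qsmul]
  simp only [not_forall, exists_prop, and_comm]

end RightLinearIndependence

namespace ArnoldiData

open Finset

variable {K : ℕ} {A : Matrix (Fin n) (Fin n) ℍ[ℝ]} {V : ℕ → Matrix (Fin n) (Fin m) ℍ[ℝ]}
  {h : ℕ → ℕ → ℍ[ℝ]}

theorem trace_mul_self_succ (hA : ArnoldiData n m K A V h) {j : ℕ} (hj : j ∈ Icc 1 K) :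
    trace ((V (j + 1))ᴴ * V (j + 1)) = 1 := by
  have hne : qnorm (A * V j - ∑ i ∈ Icc 1 j, qsmul (V i) (h i j)) ≠ 0 := fun h0 =>
    hA.hsub_ne j hj (by rw [hA.hsub j hj, h0, Quaternion.coe_zero])
  rw [hA.vdef j hj, hA.hsub j hj]
  exact trace_conjTranspose_mul_self_qsmul_inv_qnorm hne

theorem trace_mul_succ_eq_zero (hA : ArnoldiData n m K A V h) {j : ℕ} (hj : j ∈ Icc 1 K)
    (horth : TraceOrthonormalOn V (Icc 1 j)) {i : ℕ} (hi : i ∈ Icc 1 j) :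
    trace ((V i)ᴴ * V (j + 1)) = 0 := by
  have hcoeff : ∑ l ∈ Icc 1 j, qsmul (V l) (h l j) =
      ∑ l ∈ Icc 1 j, qsmul (V l) (trace ((V l)ᴴ * (A * V j))) :=
    sum_congr rfl fun l hl => by rw [hA.hdef j hj l hl]
  rw [hA.vdef j hj, trace_conjTranspose_mul_qsmul, hcoeff,
    horth.trace_mul_sub_sum_eq_zero hi, zero_mul]

theorem traceOrthonormalOn (hA : ArnoldiData n m K A V h) :
    TraceOrthonormalOn V (Icc 1 (K + 1)) := by
  suffices ∀ j ≤ K + 1, TraceOrthonormalOn V (Icc 1 j) from this _ le_rfl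
  intro j
  induction j with
  | zero => intro _ i hi; simp at hi
  | succ j ih =>
    intro hj
    rcases Nat.eq_zero_or_pos j with rfl | hj0
    · intro i hi l hl
      obtain rfl : i = 1 := by simpa using hi
      obtain rfl : l = 1 := by simpa using hl
      rw [trace_conjTranspose_mul_self, hA.normV1, if_pos rfl]
      norm_num
    · have hjK : j ∈ Icc 1 K := mem_Icc.2 ⟨hj0, by omega⟩
      have horth := ih (by omega)
      rw [← insert_Icc_right_eq_Icc_add_one (by omega)]
      exact horth.insert (fun i hi => hA.trace_mul_succ_eq_zero hjK horth hi)
        (hA.trace_mul_self_succ hjK)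

theorem mem_krylov (hA : ArnoldiData n m K A V h) :
    ∀ j ≤ K + 1, ∀ l ∈ Icc 1 j, V l ∈ krylov A (V 1) j := by
  intro j
  induction j with
  | zero => intro _ l hl; simp at hl
  | succ j ih =>
    intro hj l hl
    obtain ⟨hl1, hlj⟩ := mem_Icc.1 hl
    rcases hlj.lt_or_eq with hlt | rfl
    · exact krylov_mono j.le_succ (ih (by omega) l (mem_Icc.2 ⟨hl1, by omega⟩))
    rcases Nat.eq_zero_or_pos j with rfl | hj0
    · simpa using pow_mul_mem_krylov (A := A) (X := V 1) zero_lt_one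
    have hjK : j ∈ Icc 1 K := mem_Icc.2 ⟨hj0, by omega⟩
    have hV : ∀ i ∈ Icc 1 j, V i ∈ krylov A (V 1) (j + 1) := fun i hi =>
      krylov_mono j.le_succ (ih (by omega) i hi)
    rw [hA.vdef j hjK]
    refine smul_mem _ _ (sub_mem ?_ (sum_mem fun i hi => smul_mem _ _ (hV i hi)))
    exact mul_mem_krylov_succ (ih (by omega) j (right_mem_Icc.2 hj0))

theorem span_eq_krylov (hA : ArnoldiData n m K A V h) :
    span ℍ[ℝ]ᵐᵒᵖ (V '' Icc 1 (K + 1)) = krylov A (V 1) (K + 1) := by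
  refine eq_of_le_of_finrank_le (span_le.2 ?_) ?_
  · rintro _ ⟨l, hl, rfl⟩
    exact hA.mem_krylov _ le_rfl l hl
  · rw [hA.traceOrthonormalOn.finrank_span, Nat.card_Icc, Nat.add_sub_cancel]
    exact finrank_krylov_le

theorem linearIndependent_krylov (hA : ArnoldiData n m K A V h) :
    LinearIndependent ℍ[ℝ]ᵐᵒᵖ fun i : Fin (K + 1) => A ^ (i : ℕ) * V 1 := by
  rw [linearIndependent_iff_card_eq_finrank_span, Set.finrank, ← krylov, ← hA.span_eq_krylov,
    hA.traceOrthonormalOn.finrank_span]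
  simp

theorem residual_eq_zero_iff (hA : ArnoldiData n m K A V h) :
    A * V (K + 1) - ∑ i ∈ Icc 1 (K + 1), qsmul (V i) (trace ((V i)ᴴ * (A * V (K + 1)))) = 0 ↔
      A ^ (K + 1) * V 1 ∈ krylov A (V 1) (K + 1) := by
  rw [hA.traceOrthonormalOn.sub_sum_eq_zero_iff, hA.span_eq_krylov, ← forall_mul_mem_krylov_iff]
  refine ⟨fun hAV Y hY => ?_, fun hinv =>
    hinv _ (hA.mem_krylov _ le_rfl _ (right_mem_Icc.2 (Nat.le_add_left 1 K)))⟩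
  rw [← hA.span_eq_krylov] at hY
  refine mul_mem_of_mem_span (Set.forall_mem_image.2 fun l hl => ?_) hY
  obtain ⟨hl1, hlK⟩ := mem_Icc.1 hl
  rcases hlK.lt_or_eq with hlt | rfl
  · exact krylov_mono (by omega)
      (mul_mem_krylov_succ (hA.mem_krylov l (by omega) l (right_mem_Icc.2 hl1)))
  · exact hAV

end ArnoldiData

/-- Under the Arnoldi hypotheses through step `k − 1`, with
`W_k := A V_k − Σ_{i=1}^k V_i tr(V_i^*(A V_k))`, the global quaternion Arnoldi process
breaks down at step `k` (`W_k = 0`) if and only if the grade of `V₁` with respect to `A`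
is `k`: `V₁, A V₁, …, A^{k−1} V₁` are right linearly independent over ℍ while
`V₁, A V₁, …, A^k V₁` are right linearly dependent over ℍ. Moreover, if `W_k = 0` then
the Krylov subspace `𝒦_k(A, V₁)` (the right span of `V₁, A V₁, …, A^{k−1} V₁`) is
invariant under left multiplication by `A`. -/
theorem global_quaternion_arnoldi_breakdown_iff_grade (n m k : ℕ) (hk : 1 ≤ k)
    (A : Matrix (Fin n) (Fin n) ℍ[ℝ]) (V : ℕ → Matrix (Fin n) (Fin m) ℍ[ℝ])
    (h : ℕ → ℕ → ℍ[ℝ]) (hA : ArnoldiData n m (k - 1) A V h)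
    (W : Matrix (Fin n) (Fin m) ℍ[ℝ])
    (hW : W = A * V k -
        ∑ i ∈ Finset.Icc 1 k, qsmul (V i) (Matrix.trace ((V i)ᴴ * (A * V k)))) :
    (W = 0 ↔
      ((∀ α : Fin k → ℍ[ℝ],
          ∑ i : Fin k, qsmul (A ^ (i : ℕ) * V 1) (α i) = 0 → α = 0) ∧
       (∃ α : Fin (k + 1) → ℍ[ℝ], α ≠ 0 ∧
          ∑ i : Fin (k + 1), qsmul (A ^ (i : ℕ) * V 1) (α i) = 0))) ∧
    (W = 0 →
      ∀ X ∈ {X : Matrix (Fin n) (Fin m) ℍ[ℝ] |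
          ∃ α : Fin k → ℍ[ℝ], X = ∑ i : Fin k, qsmul (A ^ (i : ℕ) * V 1) (α i)},
        A * X ∈ {X : Matrix (Fin n) (Fin m) ℍ[ℝ] |
          ∃ α : Fin k → ℍ[ℝ], X = ∑ i : Fin k, qsmul (A ^ (i : ℕ) * V 1) (α i)}) := by
  obtain ⟨K, rfl⟩ : ∃ K, k = K + 1 := ⟨k - 1, by omega⟩
  rw [Nat.add_sub_cancel] at hA
  have hindep := hA.linearIndependent_krylov
  have hbreak : W = 0 ↔ A ^ (K + 1) * V 1 ∈ krylov A (V 1) (K + 1) :=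
    hW ▸ hA.residual_eq_zero_iff
  refine ⟨⟨fun hW0 => ⟨linearIndependent_iff_qsmul.1 hindep, ?_⟩, fun ⟨_, hdep⟩ => ?_⟩, ?_⟩
  · exact not_linearIndependent_iff_qsmul.1
      ((pow_mul_mem_krylov_iff_not_linearIndependent hindep).1 (hbreak.1 hW0))
  · exact hbreak.2 ((pow_mul_mem_krylov_iff_not_linearIndependent hindep).2
      (not_linearIndependent_iff_qsmul.2 hdep))
  · intro hW0 X hX
    exact mem_krylov_iff.1 (forall_mul_mem_krylov_iff.2 (hbreak.1 hW0) X (mem_krylov_iff.2 hX))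
end
end

section
/- (Residual of the Gl-QFOM iterate.) Let A ∈ ℍ^{n×n}, B, X₀ ∈ ℍ^{n×m}, R₀ := B − A X₀, β := ‖R₀‖ > 0, V₁ := R₀ β^{-1}, and assume the Arnoldi hypotheses through step k. Suppose y ∈ ℍ^k satisfies H_k y = β e₁, i.e. Σ_{j=1}^k h_{i,j} y_j = β δ_{i1} for i = 1, …, k (with h_{i,j} := 0 for i > j+1). Set X_k := X₀ + Σ_{j=1}^k V_j y_j. Then B − A X_k = − (V_{k+1} y_k) · h_{k+1,k} (where y_k is the last component of y and h_{k+1,k} is a positive real), and consequently ‖B − A X_k‖ = h_{k+1,k} · |y_k|. -/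
/-!
Since `V₁ = R₀ β⁻¹` and `h_{i,j} = 0` below the subdiagonal, the Arnoldi recurrence gives
`A V_j = Σ_{i=1}^{k+1} V_i h_{i,j}` for `j ≤ k`, hence
`A Σ_j V_j y_j = Σ_{i=1}^{k+1} V_i (H y)_i`. The equations `H_k y = β e₁` collapse the rows
`i ≤ k` to `V₁ β = R₀`, and only row `k+1`, equal to `h_{k+1,k} y_k`, survives in the residual.
Its norm follows from `‖V_{k+1}‖ = 1` and `‖X α‖ = ‖X‖ |α|`, since `h_{k+1,k}` is real.
-/

open Matrix Quaternion

noncomputable section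

theorem Quaternion.re_sum {ι : Type*} (s : Finset ι) (c : ι → ℍ[ℝ]) :
    (∑ i ∈ s, c i).re = ∑ i ∈ s, (c i).re :=
  map_sum (QuaternionAlgebra.reₗ (-1 : ℝ) 0 (-1)) c s

section qsmul

variable {n m : ℕ}

theorem qsmul_qsmul (X : Matrix (Fin n) (Fin m) ℍ[ℝ]) (a b : ℍ[ℝ]) :
    qsmul (qsmul X a) b = qsmul X (a * b) := by
  funext i j; simp only [qsmul, mul_assoc]

@[simp] theorem qsmul_one (X : Matrix (Fin n) (Fin m) ℍ[ℝ]) : qsmul X 1 = X := by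
  funext i j; simp only [qsmul, mul_one]

@[simp] theorem qsmul_zero (X : Matrix (Fin n) (Fin m) ℍ[ℝ]) : qsmul X 0 = 0 := by
  funext i j; simp only [qsmul, mul_zero, Matrix.zero_apply]

theorem qsmul_qsmul_inv_cancel (X : Matrix (Fin n) (Fin m) ℍ[ℝ]) {a : ℍ[ℝ]} (ha : a ≠ 0) :
    qsmul (qsmul X a⁻¹) a = X := by
  rw [qsmul_qsmul, inv_mul_cancel₀ ha, qsmul_one]

theorem mul_qsmul (A : Matrix (Fin n) (Fin n) ℍ[ℝ]) (X : Matrix (Fin n) (Fin m) ℍ[ℝ])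
    (a : ℍ[ℝ]) : A * qsmul X a = qsmul (A * X) a := by
  funext i j; simp only [qsmul, mul_apply, Finset.sum_mul, mul_assoc]

theorem qsmul_sum {ι : Type*} (X : Matrix (Fin n) (Fin m) ℍ[ℝ]) (s : Finset ι)
    (c : ι → ℍ[ℝ]) : qsmul X (∑ i ∈ s, c i) = ∑ i ∈ s, qsmul X (c i) := by
  funext i j; simp only [qsmul, Finset.mul_sum, Matrix.sum_apply]

theorem sum_qsmul {ι : Type*} (s : Finset ι) (X : ι → Matrix (Fin n) (Fin m) ℍ[ℝ])
    (a : ℍ[ℝ]) : qsmul (∑ i ∈ s, X i) a = ∑ i ∈ s, qsmul (X i) a := by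
  funext i j; simp only [qsmul, Finset.sum_mul, Matrix.sum_apply]

theorem qnorm_eq_sqrt_sum (X : Matrix (Fin n) (Fin m) ℍ[ℝ]) :
    qnorm X = Real.sqrt (∑ j, ∑ i, ‖X i j‖ ^ 2) := by
  simp only [qnorm, trace, diag, mul_apply, conjTranspose_apply, Quaternion.re_sum,
    star_mul_self, normSq_eq_norm_mul_self, re_coe, sq]

theorem qnorm_qsmul (X : Matrix (Fin n) (Fin m) ℍ[ℝ]) (a : ℍ[ℝ]) :
    qnorm (qsmul X a) = qnorm X * ‖a‖ := by
  simp only [qnorm_eq_sqrt_sum, qsmul, norm_mul, mul_pow, ← Finset.sum_mul]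
  rw [Real.sqrt_mul (by positivity), Real.sqrt_sq (norm_nonneg a)]

theorem qnorm_neg (X : Matrix (Fin n) (Fin m) ℍ[ℝ]) : qnorm (-X) = qnorm X := by
  simp only [qnorm_eq_sqrt_sum, Matrix.neg_apply, norm_neg]

end qsmul

theorem sum_hessenberg_row_succ {h : ℕ → ℕ → ℍ[ℝ]}
    (hzero : ∀ i j : ℕ, j + 1 < i → h i j = 0)
    {k : ℕ} (hk : 1 ≤ k) (y : ℕ → ℍ[ℝ]) :
    ∑ j ∈ Finset.Icc 1 k, h (k + 1) j * y j = h (k + 1) k * y k := by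
  refine Finset.sum_eq_single_of_mem k (Finset.right_mem_Icc.mpr hk) fun j hj hjk => ?_
  rw [hzero (k + 1) j (by simp only [Finset.mem_Icc] at hj; omega), zero_mul]

namespace ArnoldiData

variable {n m k : ℕ} {A : Matrix (Fin n) (Fin n) ℍ[ℝ]} {V : ℕ → Matrix (Fin n) (Fin m) ℍ[ℝ]}
  {h : ℕ → ℕ → ℍ[ℝ]}

theorem mul_V (hA : ArnoldiData n m k A V h) {j : ℕ} (hj : j ∈ Finset.Icc 1 k) :
    A * V j = ∑ i ∈ Finset.Icc 1 (j + 1), qsmul (V i) (h i j) := by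
  rw [Finset.sum_Icc_succ_top (Nat.le_add_left 1 j), hA.vdef j hj,
    qsmul_qsmul_inv_cancel _ (hA.hsub_ne j hj)]
  abel

theorem mul_V_eq_sum_Icc_succ (hA : ArnoldiData n m k A V h)
    (hzero : ∀ i j : ℕ, j + 1 < i → h i j = 0) {j : ℕ} (hj : j ∈ Finset.Icc 1 k) :
    A * V j = ∑ i ∈ Finset.Icc 1 (k + 1), qsmul (V i) (h i j) := by
  have hjk : j + 1 ≤ k + 1 := by simp only [Finset.mem_Icc] at hj; omega
  rw [hA.mul_V hj, Finset.sum_subset (Finset.Icc_subset_Icc_right hjk)]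
  intro i hi hni
  simp only [Finset.mem_Icc, not_and, not_le] at hi hni
  rw [hzero i j (by omega), qsmul_zero]

/-- The Arnoldi relation `A 𝒱_k y = 𝒱_{k+1} (H̄_k y)`. -/
theorem mul_sum_qsmul (hA : ArnoldiData n m k A V h)
    (hzero : ∀ i j : ℕ, j + 1 < i → h i j = 0) (y : ℕ → ℍ[ℝ]) :
    A * ∑ j ∈ Finset.Icc 1 k, qsmul (V j) (y j) =
      ∑ i ∈ Finset.Icc 1 (k + 1), qsmul (V i) (∑ j ∈ Finset.Icc 1 k, h i j * y j) := by
  simp only [qsmul_sum, Matrix.mul_sum, mul_qsmul]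
  rw [Finset.sum_comm]
  refine Finset.sum_congr rfl fun j hj => ?_
  rw [hA.mul_V_eq_sum_Icc_succ hzero hj, sum_qsmul]
  simp only [qsmul_qsmul]

theorem exists_pos_subdiag_eq_coe (hA : ArnoldiData n m k A V h) {j : ℕ}
    (hj : j ∈ Finset.Icc 1 k) :
    ∃ γ : ℝ, 0 < γ ∧ h (j + 1) j = γ := by
  refine ⟨_, lt_of_le_of_ne (Real.sqrt_nonneg _) fun h0 => hA.hsub_ne j hj ?_, hA.hsub j hj⟩
  rw [hA.hsub j hj, qnorm, ← h0, coe_zero]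

theorem qnorm_V_succ (hA : ArnoldiData n m k A V h) {j : ℕ} (hj : j ∈ Finset.Icc 1 k) :
    qnorm (V (j + 1)) = 1 := by
  obtain ⟨γ, hγ, hγh⟩ := hA.exists_pos_subdiag_eq_coe hj
  have hW := hA.hsub j hj
  rw [hγh, coe_inj] at hW
  rw [hA.vdef j hj, qnorm_qsmul, hγh, ← coe_inv, norm_coe, ← hW, norm_inv,
    Real.norm_of_nonneg hγ.le, mul_inv_cancel₀ hγ.ne']

end ArnoldiData

theorem glqfom_residual_general (n m k : ℕ) (hk : 1 ≤ k)
    (A : Matrix (Fin n) (Fin n) ℍ[ℝ]) (B X₀ : Matrix (Fin n) (Fin m) ℍ[ℝ])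
    (R₀ : Matrix (Fin n) (Fin m) ℍ[ℝ]) (hR₀ : R₀ = B - A * X₀)
    (β : ℝ) (hβpos : 0 < β)
    (V : ℕ → Matrix (Fin n) (Fin m) ℍ[ℝ]) (hV1 : V 1 = qsmul R₀ ((β : ℍ[ℝ])⁻¹))
    (h : ℕ → ℕ → ℍ[ℝ]) (hA : ArnoldiData n m k A V h)
    (hzero : ∀ i j : ℕ, j + 1 < i → h i j = 0)
    (y : ℕ → ℍ[ℝ])
    (hy : ∀ i ∈ Finset.Icc 1 k,
      ∑ j ∈ Finset.Icc 1 k, h i j * y j = if i = 1 then (β : ℍ[ℝ]) else 0)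
    (Xk : Matrix (Fin n) (Fin m) ℍ[ℝ])
    (hXk : Xk = X₀ + ∑ j ∈ Finset.Icc 1 k, qsmul (V j) (y j)) :
    B - A * Xk = -(qsmul (qsmul (V (k + 1)) (y k)) (h (k + 1) k)) ∧
    qnorm (B - A * Xk) = (h (k + 1) k).re * ‖y k‖ := by
  have hkk : k ∈ Finset.Icc 1 k := Finset.right_mem_Icc.mpr hk
  have hβ : (β : ℍ[ℝ]) ≠ 0 := by rw [← coe_zero, Ne, coe_inj]; exact hβpos.ne'
  have rows_le_k :
      ∑ i ∈ Finset.Icc 1 k, qsmul (V i) (∑ j ∈ Finset.Icc 1 k, h i j * y j) = R₀ := by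
    rw [Finset.sum_eq_single_of_mem 1 (by simp [hk]) fun i hi hi1 => by
      rw [hy i hi, if_neg hi1, qsmul_zero]]
    rw [hy 1 (by simp [hk]), if_pos rfl, hV1, qsmul_qsmul_inv_cancel _ hβ]
  obtain ⟨γ, hγ, hγh⟩ := hA.exists_pos_subdiag_eq_coe hkk
  have residual : B - A * Xk = -qsmul (V (k + 1)) (y k * γ) := by
    rw [hXk, Matrix.mul_add, hA.mul_sum_qsmul hzero, Finset.sum_Icc_succ_top (by omega),
      rows_le_k, sum_hessenberg_row_succ hzero hk, hγh, coe_commutes, hR₀]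
    abel
  refine ⟨by rw [residual, hγh, qsmul_qsmul], ?_⟩
  rw [residual, qnorm_neg, qnorm_qsmul, hA.qnorm_V_succ hkk, one_mul, norm_mul, norm_coe, hγh,
    re_coe, Real.norm_of_nonneg hγ.le, mul_comm]

/-- Residual of the Gl-QFOM iterate: with `R₀ = B − A X₀`, `β = ‖R₀‖ > 0`,
`V₁ = R₀ β⁻¹`, the Arnoldi hypotheses through step `k` (and `h i j = 0` for `i > j+1`),
if `y ∈ ℍ^k` solves `H_k y = β e₁`, then the iterate `X_k = X₀ + Σ_{j=1}^k V_j y_j`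
satisfies `B − A X_k = −(V_{k+1} y_k) h_{k+1,k}` and `‖B − A X_k‖ = h_{k+1,k} |y_k|`. -/
theorem glqfom_residual (n m k : ℕ) (hk : 1 ≤ k)
    (A : Matrix (Fin n) (Fin n) ℍ[ℝ]) (B X₀ : Matrix (Fin n) (Fin m) ℍ[ℝ])
    (R₀ : Matrix (Fin n) (Fin m) ℍ[ℝ]) (hR₀ : R₀ = B - A * X₀)
    (β : ℝ) (hβ : β = qnorm R₀) (hβpos : 0 < β)
    (V : ℕ → Matrix (Fin n) (Fin m) ℍ[ℝ]) (hV1 : V 1 = qsmul R₀ ((β : ℍ[ℝ])⁻¹))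
    (h : ℕ → ℕ → ℍ[ℝ]) (hA : ArnoldiData n m k A V h)
    (hzero : ∀ i j : ℕ, j + 1 < i → h i j = 0)
    (y : ℕ → ℍ[ℝ])
    (hy : ∀ i ∈ Finset.Icc 1 k,
      ∑ j ∈ Finset.Icc 1 k, h i j * y j = if i = 1 then (β : ℍ[ℝ]) else 0)
    (Xk : Matrix (Fin n) (Fin m) ℍ[ℝ])
    (hXk : Xk = X₀ + ∑ j ∈ Finset.Icc 1 k, qsmul (V j) (y j)) :
    B - A * Xk = -(qsmul (qsmul (V (k + 1)) (y k)) (h (k + 1) k)) ∧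
    qnorm (B - A * Xk) = (h (k + 1) k).re * ‖y k‖ :=
  glqfom_residual_general n m k hk A B X₀ R₀ hR₀ β hβpos V hV1 h hA hzero y hy Xk hXk
end
end
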